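/- Let d ≥ 1, ω ≥ 0 and M > 0. Let 𝒜 = (A_k)_{k∈ℤ} be a sequence of linear isomorphisms of ℝ^d such that ‖A_k‖ ≤ M and ‖A_k⁻¹‖ ≤ M for all k ∈ ℤ. If 𝒜 has Perron property B_ω(ℤ), then B^+(𝒜) + B^−(𝒜) = ℝ^d. -/

import Mathlib

noncomputable section

open Filter Topology

/-- `ℝ^d`. -/
abbrev Ed (d : ℕ) := EuclideanSpace ℝ (Fin d)

/-- The weight `(|k| + 1) ^ ω`. -/
noncomputable def wt (ω : ℝ) (k : ℤ) : ℝ := (|(k : ℝ)| + 1) ^ ω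

/-- `PhiNat A l n = A (l+n-1) ∘ … ∘ A l`. -/
noncomputable def PhiNat {d : ℕ} (A : ℤ → (Ed d ≃L[ℝ] Ed d)) (l : ℤ) :
    ℕ → (Ed d ≃L[ℝ] Ed d)
  | 0 => ContinuousLinearEquiv.refl ℝ (Ed d)
  | n + 1 => (PhiNat A l n).trans (A (l + n))

/-- The Cauchy matrix `Φ_{m,l}`. -/
noncomputable def Phi {d : ℕ} (A : ℤ → (Ed d ≃L[ℝ] Ed d)) (m l : ℤ) : Ed d ≃L[ℝ] Ed d :=
  if l ≤ m then PhiNat A l (m - l).toNat else (PhiNat A m (l - m).toNat).symm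

/-- Hyperbolicity on `I` with explicit data. -/
def HyperbolicOnWith {d : ℕ} (A : ℤ → (Ed d ≃L[ℝ] Ed d)) (I : Set ℤ) (K lam : ℝ)
    (P Q : ℤ → (Ed d →L[ℝ] Ed d)) : Prop :=
  0 < K ∧ 0 < lam ∧ lam < 1 ∧
  (∀ k ∈ I, P k + Q k = 1) ∧
  (∀ k ∈ I, (P k).comp (P k) = P k ∧ (Q k).comp (Q k) = Q k) ∧
  (∀ k ∈ I, IsCompl (LinearMap.range (P k : Ed d →ₗ[ℝ] Ed d)) (LinearMap.range (Q k : Ed d →ₗ[ℝ] Ed d))) ∧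
  (∀ k ∈ I, k + 1 ∈ I →
      (A k) '' (LinearMap.range (P k : Ed d →ₗ[ℝ] Ed d) : Set (Ed d)) = (LinearMap.range (P (k + 1) : Ed d →ₗ[ℝ] Ed d) : Set (Ed d)) ∧
      (A k) '' (LinearMap.range (Q k : Ed d →ₗ[ℝ] Ed d) : Set (Ed d)) = (LinearMap.range (Q (k + 1) : Ed d →ₗ[ℝ] Ed d) : Set (Ed d))) ∧
  (∀ l ∈ I, ∀ k ∈ I, l ≤ k → ∀ v ∈ LinearMap.range (P l : Ed d →ₗ[ℝ] Ed d),
      ‖(Phi A k l) v‖ ≤ K * lam ^ (k - l).toNat * ‖v‖) ∧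
  (∀ l ∈ I, ∀ k ∈ I, k ≤ l → ∀ v ∈ LinearMap.range (Q l : Ed d →ₗ[ℝ] Ed d),
      ‖(Phi A k l) v‖ ≤ K * lam ^ (l - k).toNat * ‖v‖) ∧
  (∀ k ∈ I, ‖P k‖ ≤ K ∧ ‖Q k‖ ≤ K)

/-- The sequence `A` is hyperbolic on `I`. -/
def IsHyperbolicOn {d : ℕ} (A : ℤ → (Ed d ≃L[ℝ] Ed d)) (I : Set ℤ) : Prop :=
  ∃ (K lam : ℝ) (P Q : ℤ → (Ed d →L[ℝ] Ed d)), HyperbolicOnWith A I K lam P Q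

/-- Perron property `B_ω(ℤ+)`. -/
def PerronBPos {d : ℕ} (ω : ℝ) (A : ℤ → (Ed d ≃L[ℝ] Ed d)) : Prop :=
  ∀ f : ℤ → Ed d, f 0 = 0 → (∃ C : ℝ, ∀ k : ℤ, 0 ≤ k → ‖f k‖ * wt ω k ≤ C) →
    ∃ x : ℤ → Ed d, (∃ C : ℝ, ∀ k : ℤ, 0 ≤ k → ‖x k‖ * wt ω k ≤ C) ∧
      ∀ k : ℤ, 0 ≤ k → x (k + 1) = A k (x k) + f (k + 1)

/-- Perron property `B_ω(ℤ)`. -/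
def PerronBZ {d : ℕ} (ω : ℝ) (A : ℤ → (Ed d ≃L[ℝ] Ed d)) : Prop :=
  ∀ f : ℤ → Ed d, (∃ C : ℝ, ∀ k : ℤ, ‖f k‖ * wt ω k ≤ C) →
    ∃ x : ℤ → Ed d, (∃ C : ℝ, ∀ k : ℤ, ‖x k‖ * wt ω k ≤ C) ∧
      ∀ k : ℤ, x (k + 1) = A k (x k) + f (k + 1)

/-- `B^+(𝒜)`. -/
def Bplus {d : ℕ} (A : ℤ → (Ed d ≃L[ℝ] Ed d)) : Set (Ed d) :=
  {v | Tendsto (fun k : ℤ => ‖(Phi A k 0) v‖) atTop (𝓝 0)}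

/-- `B^-(𝒜)`. -/
def Bminus {d : ℕ} (A : ℤ → (Ed d ≃L[ℝ] Ed d)) : Set (Ed d) :=
  {v | Tendsto (fun k : ℤ => ‖(Phi A k 0) v‖) atBot (𝓝 0)}

/-!
If the forward orbit `Φ(·,0)v` lies in `N_ω(ℤ₊)`, feeding it back into the Perron property `d`
times gives sequences `x₀ = Φ(·,0)v, x₁, …, x_d` in `N_ω(ℤ₊)` with
`x_{i+1}(n+1) = A_n x_{i+1}(n) + x_i(n+1)`, and then
`Φ(n,0) x_i(0) = ∑_{j ≤ i} (-1)^{i-j} C(n, i-j) x_j(n)`. The `d + 1` vectors `x_i(0)` are linearly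
dependent; dividing a dependency `x_m(0) = ∑_{i<m} c_i x_i(0)` by `C(n, m)` and using
`C(n, r) / C(n, m) → 0` for `r < m` leaves `Φ(n,0)v → 0`. So bounded forward orbits decay, and
so do bounded backward orbits, because the reversed sequence `A_{-k-1}⁻¹` inherits the Perron
property: its equation with forcing `g` is the original one with forcing `-A_{k-1} g(1-k)`.
Finally, solving with the forcing `f_1 = A_0 u`, `f_k = 0` otherwise, gives `x` such that `x_0 + u`
has the forward orbit `x_0 + u, x_1, x_2, …` and `-x_0` the backward orbit `-x_0, -x_{-1}, …`,
both bounded.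
-/

open Finset

section AltBinomialSum

variable (R : Type*) {M : Type*} [CommRing R] [AddCommGroup M] [Module R M]

def altBinomialSum (z : ℕ → ℕ → M) (i n : ℕ) : M :=
  ∑ p ∈ antidiagonal i, ((-1 : R) ^ p.2 * n.choose p.2) • z p.1 n

variable {R}

lemma altBinomialSum_succ_succ {z : ℕ → ℕ → M} (h0 : ∀ n, z 0 (n + 1) = z 0 n)
    (hsucc : ∀ i n, z (i + 1) (n + 1) = z (i + 1) n + z i (n + 1)) (i n : ℕ) :
    altBinomialSum R z (i + 1) (n + 1) =
      altBinomialSum R z (i + 1) n - altBinomialSum R z i n + altBinomialSum R z i (n + 1) := by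
  have hpascal : ∀ r : ℕ, ((-1 : R) ^ (r + 1) * (n + 1).choose (r + 1)) =
      (-1 : R) ^ (r + 1) * n.choose (r + 1) - (-1) ^ r * n.choose r := by
    intro r
    rw [Nat.choose_succ_succ']
    push_cast
    ring
  have hmixed : ∑ p ∈ antidiagonal (i + 1), ((-1 : R) ^ p.2 * (n + 1).choose p.2) • z p.1 n =
      altBinomialSum R z (i + 1) n - altBinomialSum R z i n := by
    rw [altBinomialSum, altBinomialSum, Nat.sum_antidiagonal_succ', Nat.sum_antidiagonal_succ']
    simp only [hpascal, sub_smul, sum_sub_distrib, pow_zero, Nat.choose_zero_right, Nat.cast_one,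
      mul_one, one_smul]
    abel
  rw [altBinomialSum, Nat.sum_antidiagonal_succ, ← hmixed, Nat.sum_antidiagonal_succ, h0]
  simp only [hsucc, smul_add, sum_add_distrib, altBinomialSum]
  abel

lemma altBinomialSum_eq_apply_zero {z : ℕ → ℕ → M} (h0 : ∀ n, z 0 (n + 1) = z 0 n)
    (hsucc : ∀ i n, z (i + 1) (n + 1) = z (i + 1) n + z i (n + 1)) (i n : ℕ) :
    altBinomialSum R z i n = z i 0 := by
  induction i generalizing n with
  | zero => induction n with
    | zero => simp [altBinomialSum]
    | succ n ih => simpa [altBinomialSum, h0] using ih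
  | succ i ih => induction n with
    | zero => simp [altBinomialSum, Nat.sum_antidiagonal_succ']
    | succ n ihn => rw [altBinomialSum_succ_succ h0 hsucc, ihn, ih, ih]; abel

end AltBinomialSum

lemma tendsto_choose_div_choose {r m : ℕ} (h : r < m) :
    Tendsto (fun n : ℕ => (n.choose r : ℝ) / n.choose m) atTop (𝓝 0) := by
  have hdeg : (descPochhammer ℝ r).degree < (descPochhammer ℝ m).degree := by
    rw [Polynomial.degree_eq_natDegree (monic_descPochhammer ℝ r).ne_zero,
      Polynomial.degree_eq_natDegree (monic_descPochhammer ℝ m).ne_zero,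
      descPochhammer_natDegree, descPochhammer_natDegree]
    exact_mod_cast h
  have := ((Polynomial.div_tendsto_atTop_zero_of_degree_lt _ _ hdeg).comp
    tendsto_natCast_atTop_atTop).const_mul ((m.factorial : ℝ) / r.factorial)
  rw [mul_zero] at this
  refine this.congr fun n => ?_
  simp only [Function.comp_apply, Nat.cast_choose_eq_descPochhammer_div ℝ]
  field_simp

section Decay

variable {F : Type*} [NormedAddCommGroup F] [NormedSpace ℝ F]

lemma tendsto_inv_choose_smul {r m : ℕ} (h : r < m) (a : ℝ) {w : ℕ → F}
    (hw : IsBoundedUnder (· ≤ ·) atTop (norm ∘ w)) :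
    Tendsto (fun n : ℕ => (n.choose m : ℝ)⁻¹ • ((a * n.choose r) • w n)) atTop (𝓝 0) := by
  simp only [smul_smul]
  refine Tendsto.zero_smul_isBoundedUnder_le ?_ hw
  simpa [div_eq_inv_mul, mul_left_comm] using (tendsto_choose_div_choose h).const_mul a

lemma tendsto_inv_choose_smul_altBinomialSum {y : ℕ → ℕ → F}
    (hy : ∀ j, IsBoundedUnder (· ≤ ·) atTop (norm ∘ y j)) {i m : ℕ} (h : i < m) :
    Tendsto (fun n : ℕ => (n.choose m : ℝ)⁻¹ • altBinomialSum ℝ y i n) atTop (𝓝 0) := by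
  simp only [altBinomialSum, smul_sum]
  simpa using tendsto_finsetSum _ fun (p : ℕ × ℕ) hp =>
    tendsto_inv_choose_smul (by linarith [mem_antidiagonal.1 hp]) _ (hy p.1)

lemma tendsto_norm_zero_of_altBinomialSum_eq {y : ℕ → ℕ → F}
    (hy : ∀ j, IsBoundedUnder (· ≤ ·) atTop (norm ∘ y j)) {m : ℕ} (c : Fin m → ℝ)
    (hrel : ∀ n, altBinomialSum ℝ y m n = ∑ i : Fin m, c i • altBinomialSum ℝ y i n) :
    Tendsto (fun n => ‖y 0 n‖) atTop (𝓝 0) := by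
  set tail : ℕ → F := fun n => ∑ p ∈ (antidiagonal m).erase (0, m),
    ((-1 : ℝ) ^ p.2 * n.choose p.2) • y p.1 n
  have hsplit : ∀ n, ((-1 : ℝ) ^ m * n.choose m) • y 0 n =
      ∑ i : Fin m, c i • altBinomialSum ℝ y i n - tail n := by
    intro n
    rw [← hrel, altBinomialSum, ← sum_erase_add _ _ (by simp : ((0, m) : ℕ × ℕ) ∈ antidiagonal m)]
    abel
  have hlt : ∀ p ∈ (antidiagonal m).erase (0, m), p.2 < m := by
    rintro ⟨j, r⟩ hp
    rw [mem_erase, HasAntidiagonal.mem_antidiagonal, ne_eq, Prod.mk.injEq] at hp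
    omega
  have htail : Tendsto (fun n : ℕ => (n.choose m : ℝ)⁻¹ • tail n) atTop (𝓝 0) := by
    simpa only [tail, smul_sum, sum_const_zero] using tendsto_finsetSum _ fun p hp =>
      tendsto_inv_choose_smul (hlt p hp) ((-1) ^ p.2) (hy p.1)
  have hmain : Tendsto (fun n : ℕ => (n.choose m : ℝ)⁻¹ • ∑ i : Fin m, c i • altBinomialSum ℝ y i n)
      atTop (𝓝 0) := by
    simp only [smul_sum, smul_comm _ (c _)]
    simpa using tendsto_finsetSum _ fun i _ =>
      (tendsto_inv_choose_smul_altBinomialSum hy i.2).const_smul (c i)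
  have hlim := (hmain.sub htail).norm
  rw [sub_zero, norm_zero] at hlim
  refine hlim.congr' ?_
  filter_upwards [eventually_ge_atTop m] with n hn
  rw [← smul_sub, ← hsplit, smul_smul, norm_smul]
  have : (n.choose m : ℝ) ≠ 0 := by exact_mod_cast (Nat.choose_pos hn).ne'
  simp [this]

end Decay

theorem exists_le_finrank_mem_span_range (K : Type*) {E : Type*} [DivisionRing K]
    [AddCommGroup E] [Module K E] [FiniteDimensional K E] (e : ℕ → E) :
    ∃ m ≤ Module.finrank K E, e m ∈ Submodule.span K (Set.range fun i : Fin m => e i) := by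
  by_contra! h
  have hli : ∀ m ≤ Module.finrank K E + 1, LinearIndependent K fun i : Fin m => e i := by
    intro m hm
    induction m with
    | zero => exact linearIndependent_empty_type
    | succ m ih => exact linearIndependent_finSucc'.2 ⟨ih (by omega), h m (by omega)⟩
  simpa using (hli _ le_rfl).fintype_card_le_finrank

lemma wt_pos (ω : ℝ) (k : ℤ) : 0 < wt ω k := by
  unfold wt
  positivity

lemma one_le_wt {ω : ℝ} (hω : 0 ≤ ω) (k : ℤ) : 1 ≤ wt ω k :=
  Real.one_le_rpow (by simp) hω

lemma wt_neg (ω : ℝ) (k : ℤ) : wt ω (-k) = wt ω k := by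
  simp [wt]

lemma wt_le_two_rpow_mul_wt_one_sub {ω : ℝ} (hω : 0 ≤ ω) (k : ℤ) :
    wt ω k ≤ 2 ^ ω * wt ω (1 - k) := by
  rw [wt, wt, ← Real.mul_rpow (by norm_num) (by positivity)]
  refine Real.rpow_le_rpow (by positivity) ?_ hω
  have := abs_sub_abs_le_abs_sub (k : ℝ) 1
  rw [abs_one, abs_sub_comm] at this
  push_cast
  linarith [abs_nonneg (1 - (k : ℝ))]

/-- `y ∈ N_ω(ℤ₊)`, for a sequence indexed by `ℕ`. -/
def WeightedBdd {E : Type*} [Norm E] (ω : ℝ) (y : ℕ → E) : Prop :=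
  BddAbove (Set.range fun n : ℕ => ‖y n‖ * wt ω n)

lemma WeightedBdd.isBoundedUnder {E : Type*} [SeminormedAddGroup E] {ω : ℝ} (hω : 0 ≤ ω)
    {y : ℕ → E} (hy : WeightedBdd ω y) : IsBoundedUnder (· ≤ ·) atTop (norm ∘ y) := by
  obtain ⟨C, hC⟩ := hy
  exact isBoundedUnder_of ⟨C, fun n => show ‖y n‖ ≤ C from
    (le_mul_of_one_le_right (norm_nonneg _) (one_le_wt hω n)).trans (hC ⟨n, rfl⟩)⟩

section CauchyMatrix

variable {d : ℕ} (A : ℤ → (Ed d ≃L[ℝ] Ed d))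

lemma PhiNat_succ' (l : ℤ) (n : ℕ) :
    PhiNat A l (n + 1) = (A l).trans (PhiNat A (l + 1) n) := by
  induction n generalizing l with
  | zero => ext; simp [PhiNat]
  | succ n ih =>
    rw [PhiNat, ih, PhiNat, show l + 1 + n = l + (n + 1 : ℕ) by push_cast; ring]
    rfl

@[simp]
lemma Phi_self (k : ℤ) : Phi A k k = ContinuousLinearEquiv.refl ℝ (Ed d) := by
  simp [Phi, PhiNat]

lemma Phi_natCast (n : ℕ) : Phi A n 0 = PhiNat A 0 n := by
  simp [Phi]

lemma Phi_natCast_succ (n : ℕ) : Phi A (n + 1) 0 = (Phi A n 0).trans (A n) := by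
  rw [← Nat.cast_succ, Phi_natCast, Phi_natCast, PhiNat, zero_add]

lemma Phi_neg_natCast (n : ℕ) : Phi A (-n) 0 = (PhiNat A (-n) n).symm := by
  rcases n.eq_zero_or_pos with rfl | hn
  · ext; simp [Phi, PhiNat]
  · simp [Phi, hn.ne']

def reverseSeq : ℤ → (Ed d ≃L[ℝ] Ed d) := fun j => (A (-j - 1)).symm

lemma PhiNat_reverseSeq (n : ℕ) : PhiNat (reverseSeq A) 0 n = (PhiNat A (-n) n).symm := by
  induction n with
  | zero => ext; simp [PhiNat]
  | succ n ih =>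
    rw [PhiNat, ih, PhiNat_succ', show (-(n + 1 : ℕ) + 1 : ℤ) = -n by push_cast; ring]
    ext u
    simp [reverseSeq, show (-(n : ℤ) - 1) = -(n + 1 : ℕ) by push_cast; ring]

lemma Phi_reverseSeq_natCast (n : ℕ) : Phi (reverseSeq A) n 0 = Phi A (-n) 0 := by
  rw [Phi_natCast, PhiNat_reverseSeq, Phi_neg_natCast]

lemma mem_Bplus_iff {v : Ed d} :
    v ∈ Bplus A ↔ Tendsto (fun n : ℕ => ‖Phi A n 0 v‖) atTop (𝓝 0) := by
  change Tendsto _ atTop _ ↔ _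
  rw [← Nat.map_cast_int_atTop, tendsto_map'_iff]
  rfl

lemma mem_Bminus_iff {v : Ed d} :
    v ∈ Bminus A ↔ Tendsto (fun n : ℕ => ‖Phi A (-n) 0 v‖) atTop (𝓝 0) := by
  change Tendsto _ atBot _ ↔ _
  rw [← tendsto_comp_neg_atTop_iff, ← Nat.map_cast_int_atTop, tendsto_map'_iff]
  rfl

variable {A}

lemma Phi_natCast_succ_apply_of_pulse {x : ℤ → Ed d} {u : Ed d}
    (hx : ∀ k, x (k + 1) = A k (x k) + (Pi.single 1 (A 0 u) : ℤ → Ed d) (k + 1)) (n : ℕ) :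
    Phi A (n + 1) 0 (x 0 + u) = x (n + 1) := by
  induction n with
  | zero =>
    rw [Phi_natCast_succ]
    simpa using (hx 0).symm
  | succ n ih =>
    rw [Phi_natCast_succ, ContinuousLinearEquiv.trans_apply, Nat.cast_succ, ih, hx (n + 1),
      Pi.single_eq_of_ne (by omega), add_zero]

lemma Phi_neg_natCast_apply_of_pulse {x : ℤ → Ed d} {u : Ed d}
    (hx : ∀ k, x (k + 1) = A k (x k) + (Pi.single 1 (A 0 u) : ℤ → Ed d) (k + 1)) (n : ℕ) :
    Phi A (-n) 0 (x 0) = x (-n) := by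
  rw [← Phi_reverseSeq_natCast]
  induction n with
  | zero => simp
  | succ n ih =>
    have hrec : x (-n) = A (-n - 1) (x (-n - 1)) := by
      simpa [Pi.single_eq_of_ne (show -(n : ℤ) ≠ 1 by omega)] using hx (-n - 1)
    rw [Nat.cast_succ, Phi_natCast_succ, ContinuousLinearEquiv.trans_apply, ih, hrec, neg_add']
    simp [reverseSeq]

end CauchyMatrix

section Perron

variable {d : ℕ} {A : ℤ → (Ed d ≃L[ℝ] Ed d)} {ω : ℝ}

theorem perronBZ_reverseSeq {M : ℝ} (hω : 0 ≤ ω) (hA : ∀ k, ‖(A k : Ed d →L[ℝ] Ed d)‖ ≤ M)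
    (h : PerronBZ ω A) : PerronBZ ω (reverseSeq A) := by
  rintro g ⟨C, hC⟩
  have hM : 0 ≤ M := (norm_nonneg _).trans (hA 0)
  have hf : ∃ C', ∀ k, ‖-A (k - 1) (g (1 - k))‖ * wt ω k ≤ C' := by
    refine ⟨M * (2 ^ ω * C), fun k => ?_⟩
    calc ‖-A (k - 1) (g (1 - k))‖ * wt ω k
        ≤ (M * ‖g (1 - k)‖) * (2 ^ ω * wt ω (1 - k)) := by
          rw [norm_neg]
          exact mul_le_mul ((A (k - 1) : Ed d →L[ℝ] Ed d).le_of_opNorm_le (hA _) _)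
            (wt_le_two_rpow_mul_wt_one_sub hω k) (wt_pos ω k).le (by positivity)
      _ = M * (2 ^ ω * (‖g (1 - k)‖ * wt ω (1 - k))) := by ring
      _ ≤ M * (2 ^ ω * C) := by gcongr; exact hC _
  obtain ⟨x, ⟨Cx, hCx⟩, hx⟩ := h _ hf
  refine ⟨fun k => x (-k), ⟨Cx, fun k => by simpa [wt_neg] using hCx (-k)⟩, fun k => ?_⟩
  have hk : x (-k) = A (-k - 1) (x (-(k + 1)) - g (k + 1)) := by
    have := hx (-k - 1)
    rw [show -k - 1 + 1 = -k by ring, show -k - 1 = -(k + 1) by ring,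
      show 1 - -k = k + 1 by ring] at this
    rw [this, map_sub, show -(k + 1) = -k - 1 by ring]
    abel
  simp [reverseSeq, hk]

theorem PerronBZ.exists_solution_nat (h : PerronBZ ω A) {y : ℕ → Ed d} (hy : WeightedBdd ω y) :
    ∃ x : ℕ → Ed d, WeightedBdd ω x ∧ ∀ n : ℕ, x (n + 1) = A n (x n) + y (n + 1) := by
  obtain ⟨C, hC⟩ := hy
  have hf : ∃ C', ∀ k : ℤ, ‖if 0 < k then y k.toNat else 0‖ * wt ω k ≤ C' := by
    refine ⟨max C 0, fun k => ?_⟩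
    split_ifs with hk
    · lift k to ℕ using hk.le
      simpa using (hC ⟨k, rfl⟩).trans (le_max_left _ _)
    · simp
  obtain ⟨x, ⟨Cx, hCx⟩, hx⟩ := h _ hf
  refine ⟨fun n => x n, ⟨Cx, Set.forall_mem_range.2 fun n => hCx n⟩, fun n => ?_⟩
  simpa using hx n

theorem PerronBZ.exists_chain (h : PerronBZ ω A) {y : ℕ → Ed d} (hy : WeightedBdd ω y) :
    ∃ x : ℕ → ℕ → Ed d, x 0 = y ∧ (∀ i, WeightedBdd ω (x i)) ∧
      ∀ i n : ℕ, x (i + 1) (n + 1) = A n (x (i + 1) n) + x i (n + 1) := by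
  choose S hSbdd hS using fun (y : ℕ → Ed d) (hy : WeightedBdd ω y) => h.exists_solution_nat hy
  let x : ℕ → {y : ℕ → Ed d // WeightedBdd ω y} := fun i =>
    Nat.rec ⟨y, hy⟩ (fun _ y => ⟨S y.1 y.2, hSbdd y.1 y.2⟩) i
  exact ⟨fun i => (x i).1, rfl, fun i => (x i).2, fun i n => hS _ _ n⟩

theorem altBinomialSum_eq_Phi_apply {x : ℕ → ℕ → Ed d} (h0 : ∀ n : ℕ, x 0 (n + 1) = A n (x 0 n))
    (hx : ∀ i n : ℕ, x (i + 1) (n + 1) = A n (x (i + 1) n) + x i (n + 1)) (i n : ℕ) :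
    altBinomialSum ℝ x i n = Phi A n 0 (x i 0) := by
  have hpull : ∀ (n : ℕ) w, (Phi A (n + 1) 0).symm (A n w) = (Phi A n 0).symm w := by
    intro n w
    rw [Phi_natCast_succ, ContinuousLinearEquiv.symm_trans_apply,
      ContinuousLinearEquiv.symm_apply_apply]
  have hz := altBinomialSum_eq_apply_zero (R := ℝ) (z := fun i n => (Phi A n 0).symm (x i n))
    (fun n => by simp [h0, hpull]) (fun i n => by simp [hx, hpull]) i n
  simpa [altBinomialSum, map_sum, map_smul] using congrArg (Phi A n 0) hz

theorem PerronBZ.mem_Bplus (hω : 0 ≤ ω) (h : PerronBZ ω A) {v : Ed d}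
    (hv : WeightedBdd ω fun n : ℕ => Phi A n 0 v) : v ∈ Bplus A := by
  obtain ⟨x, hx0, hxb, hx⟩ := h.exists_chain hv
  obtain ⟨m, -, hm⟩ := exists_le_finrank_mem_span_range ℝ fun i => x i 0
  obtain ⟨c, hc⟩ := (Submodule.mem_span_range_iff_exists_fun ℝ).1 hm
  have hPhi := altBinomialSum_eq_Phi_apply (fun n => by simp [hx0, Phi_natCast_succ]) hx
  have hrel : ∀ n, altBinomialSum ℝ x m n = ∑ i : Fin m, c i • altBinomialSum ℝ x i n := by
    intro n
    simp only [hPhi, ← hc, map_sum, map_smul]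
  rw [mem_Bplus_iff]
  simpa [hx0] using
    tendsto_norm_zero_of_altBinomialSum_eq (fun j => (hxb j).isBoundedUnder hω) c hrel

theorem PerronBZ.mem_Bminus {M : ℝ} (hω : 0 ≤ ω) (hA : ∀ k, ‖(A k : Ed d →L[ℝ] Ed d)‖ ≤ M)
    (h : PerronBZ ω A) {v : Ed d} (hv : WeightedBdd ω fun n : ℕ => Phi A (-n) 0 v) :
    v ∈ Bminus A := by
  have := (perronBZ_reverseSeq hω hA h).mem_Bplus hω
    (by simpa only [Phi_reverseSeq_natCast] using hv)
  rw [mem_Bplus_iff] at this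
  rw [mem_Bminus_iff]
  simpa only [Phi_reverseSeq_natCast] using this

end Perron

theorem perron_implies_transverse_general (d : ℕ) (ω M : ℝ) (hω : 0 ≤ ω)
    (A : ℤ → (Ed d ≃L[ℝ] Ed d))
    (hA : ∀ k : ℤ, ‖(A k : Ed d →L[ℝ] Ed d)‖ ≤ M ∧
      ‖((A k).symm : Ed d →L[ℝ] Ed d)‖ ≤ M)
    (hperron : PerronBZ ω A) :
    ∀ u : Ed d, ∃ v ∈ Bplus A, ∃ w ∈ Bminus A, u = v + w := by
  intro u
  have hf : ∃ C, ∀ k : ℤ, ‖(Pi.single 1 (A 0 u) : ℤ → Ed d) k‖ * wt ω k ≤ C := by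
    refine ⟨‖A 0 u‖ * wt ω 1, fun k => ?_⟩
    rcases eq_or_ne k 1 with rfl | hk
    · simp
    · simpa [hk] using mul_nonneg (norm_nonneg (A 0 u)) (wt_pos ω 1).le
  obtain ⟨x, ⟨C, hC⟩, hx⟩ := hperron _ hf
  refine ⟨x 0 + u, hperron.mem_Bplus hω ⟨max C (‖x 0 + u‖ * wt ω 0), ?_⟩,
    -x 0, hperron.mem_Bminus hω (fun k => (hA k).1) ⟨C, ?_⟩, by abel⟩
  · rintro _ ⟨_ | n, rfl⟩
    · simp
    · simpa [Phi_natCast_succ_apply_of_pulse hx] using (hC _).trans (le_max_left _ _)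
  · rintro _ ⟨n, rfl⟩
    simpa [Phi_neg_natCast_apply_of_pulse hx, wt_neg] using hC (-n)

/-- Perron property B_ω(ℤ) implies transversality of B^+(𝒜) and B^−(𝒜). -/
theorem perron_implies_transverse (d : ℕ) (hd : 1 ≤ d) (ω M : ℝ) (hω : 0 ≤ ω) (hM : 0 < M)
    (A : ℤ → (Ed d ≃L[ℝ] Ed d))
    (hA : ∀ k : ℤ, ‖(A k : Ed d →L[ℝ] Ed d)‖ ≤ M ∧
      ‖((A k).symm : Ed d →L[ℝ] Ed d)‖ ≤ M)
    (hperron : PerronBZ ω A) :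
    ∀ u : Ed d, ∃ v ∈ Bplus A, ∃ w ∈ Bminus A, u = v + w :=
  perron_implies_transverse_general d ω M hω A hA hperron
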